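/- (Wiener's lemma for Bochner–Riesz means on T^d) Let μ be a finite complex Borel measure on T^d and δ ≥ 0. Then for every x ∈ T^d, μ({x}) = lim_{N→∞} (1/β_N^{d,δ}) Σ_{j ∈ Z^d, |j| ≤ N} (1 − |j|²/N²)_+^δ μ̂(j) e^{2πi⟨j,x⟩}, where β_N^{d,δ} = Σ_{k ∈ Z^d, |k| ≤ N} (1 − |k|²/N²)^δ. -/

import Mathlib

open MeasureTheory Filter Topology Real

/-- Integral of a complex-valued function against a finite complex measure. -/
noncomputable def cInt {α : Type*} [MeasurableSpace α]
    (μ : MeasureTheory.ComplexMeasure α) (f : α → ℂ) : ℂ :=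
  ((∫ x, f x ∂μ.re.toJordanDecomposition.posPart)
      - ∫ x, f x ∂μ.re.toJordanDecomposition.negPart)
    + Complex.I * ((∫ x, f x ∂μ.im.toJordanDecomposition.posPart)
      - ∫ x, f x ∂μ.im.toJordanDecomposition.negPart)

/-- `e^{2πi⟨j,x⟩}` for `j ∈ ℤ^d`, `x ∈ 𝕋^d`. -/
noncomputable def charTd {d : ℕ} (j : Fin d → ℤ) (x : Fin d → UnitAddCircle) : ℂ :=
  ∏ i, fourier (j i) (x i)

/-- Fourier–Stieltjes coefficients of a finite complex measure on `𝕋^d`. -/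
noncomputable def fourierCoeffTd {d : ℕ}
    (μ : MeasureTheory.ComplexMeasure (Fin d → UnitAddCircle)) (j : Fin d → ℤ) : ℂ :=
  cInt μ (fun t => charTd (fun i => -(j i)) t)

/-- The set of lattice points in the closed Euclidean ball of radius `N`. -/
noncomputable def latticeBall (d : ℕ) (N : ℕ) : Finset (Fin d → ℤ) :=
  (Fintype.piFinset fun _ : Fin d => Finset.Icc (-(N : ℤ)) (N : ℤ)).filter
    (fun k => ∑ i, (k i) ^ 2 ≤ (N : ℤ) ^ 2)

/-- The Bochner–Riesz normalizing constant `β_N^{d,δ}`. -/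
noncomputable def bochnerRieszConst (d : ℕ) (δ : ℝ) (N : ℕ) : ℝ :=
  ∑ k ∈ latticeBall d N, (1 - (∑ i, ((k i : ℝ)) ^ 2) / (N : ℝ) ^ 2) ^ δ

/-!
The Bochner–Riesz mean at `x` is `∫ K_N(x - t) dμ(t)` for the kernel
`K_N(y) = β_N⁻¹ ∑_{|j| ≤ N} (1 - |j|²/N²)^δ e^{2πi⟨j,y⟩}`. Being an average of characters,
`K_N` satisfies `|K_N| ≤ 1` and `K_N(0) = 1`, so by dominated convergence it suffices that
`K_N(y) → 0` for `y ≠ 0`. If `y_i ≠ 0`, cut the lattice ball into lines parallel to the `i`-th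
axis: along each line the weights are even and decrease away from the centre, so Abel summation
bounds each line sum by `O(1/|1 - e^{2πi y_i}|)`. There are `(2N+1)^{d-1}` lines while
`β_N ≳ N^d`, hence `K_N(y) = O(1/N)`.
-/

open Finset

section ComplexMeasureIntegral

variable {α : Type*} [MeasurableSpace α] (μ : ComplexMeasure α)

lemma cInt_const_mul (c : ℂ) (f : α → ℂ) : cInt μ (fun t => c * f t) = c * cInt μ f := by
  simp only [cInt, integral_const_mul]
  ring

lemma cInt_indicator_one {s : Set α} (hs : MeasurableSet s) : cInt μ (s.indicator 1) = μ s := by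
  have hre : (μ s).re = _ := μ.re.apply_eq_posPart_real_sub_negPart_real hs
  have him : (μ s).im = _ := μ.im.apply_eq_posPart_real_sub_negPart_real hs
  apply Complex.ext <;>
    simp [cInt, Pi.one_def, integral_indicator_const _ hs, hre, him]

lemma tendsto_cInt_of_dominated {F : ℕ → α → ℂ} {f : α → ℂ} {C : ℝ}
    (hF : ∀ n, Measurable (F n)) (hFC : ∀ n t, ‖F n t‖ ≤ C)
    (hFf : ∀ t, Tendsto (fun n => F n t) atTop (𝓝 (f t))) :
    Tendsto (fun n => cInt μ (F n)) atTop (𝓝 (cInt μ f)) := by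
  have hDCT (ν : Measure α) [IsFiniteMeasure ν] :
      Tendsto (fun n => ∫ t, F n t ∂ν) atTop (𝓝 (∫ t, f t ∂ν)) :=
    tendsto_integral_of_dominated_convergence (fun _ => C)
      (fun n => (hF n).aestronglyMeasurable) (integrable_const C)
      (fun n => .of_forall (hFC n)) (.of_forall hFf)
  exact ((hDCT _).sub (hDCT _)).add (((hDCT _).sub (hDCT _)).const_mul Complex.I)

lemma cInt_sum [TopologicalSpace α] [CompactSpace α] [OpensMeasurableSpace α] {ι : Type*}
    (s : Finset ι) {F : ι → α → ℂ} (hF : ∀ i ∈ s, Continuous (F i)) :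
    cInt μ (fun t => ∑ i ∈ s, F i t) = ∑ i ∈ s, cInt μ (F i) := by
  have hint (ν : Measure α) [IsFiniteMeasure ν] (i) (hi : i ∈ s) : Integrable (F i) ν :=
    (hF i hi).integrable_of_hasCompactSupport (.of_compactSpace _)
  simp only [cInt, integral_finsetSum s (hint _), sum_add_distrib, sum_sub_distrib, ← mul_sum]

end ComplexMeasureIntegral

lemma norm_geom_sum_le {z : ℂ} (hz : ‖z‖ = 1) (hz1 : z ≠ 1) (n : ℕ) :
    ‖∑ k ∈ range n, z ^ k‖ ≤ 2 / ‖1 - z‖ := by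
  rw [geom_sum_eq hz1, norm_div, norm_sub_rev z]
  refine div_le_div_of_nonneg_right ?_ (norm_nonneg _)
  calc ‖z ^ n - 1‖ ≤ ‖z ^ n‖ + ‖(1 : ℂ)‖ := norm_sub_le _ _
    _ = 2 := by norm_num [hz]

lemma Antitone.norm_sum_range_smul_le {E : Type*} [SeminormedAddCommGroup E] [NormedSpace ℝ E]
    {f : ℕ → ℝ} (hf : Antitone f) (hf0 : ∀ n, 0 ≤ f n) {a : ℕ → E} {M : ℝ}
    (ha : ∀ n, ‖∑ i ∈ range n, a i‖ ≤ M) (m : ℕ) :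
    ‖∑ i ∈ range m, f i • a i‖ ≤ f 0 * M := by
  set A : ℕ → E := fun n => ∑ i ∈ range n, a i
  have by_parts : ∀ m, ∑ i ∈ range m, f i • a i
      = f m • A m + ∑ i ∈ range m, (f i - f (i + 1)) • A (i + 1) := by
    intro m
    induction m with
    | zero => simp [A]
    | succ m ih =>
      rw [sum_range_succ, ih, sum_range_succ]
      simp only [A, sum_range_succ, sub_smul, smul_add]
      abel
  have hstep : ∀ i, 0 ≤ f i - f (i + 1) := fun i => sub_nonneg.mpr (hf i.le_succ)
  calc ‖∑ i ∈ range m, f i • a i‖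
      ≤ f m * M + ∑ i ∈ range m, (f i - f (i + 1)) * M := by
        rw [by_parts]
        refine (norm_add_le _ _).trans (add_le_add ?_ ((norm_sum_le _ _).trans ?_))
        · rw [norm_smul, Real.norm_of_nonneg (hf0 m)]
          exact mul_le_mul_of_nonneg_left (ha m) (hf0 m)
        · refine sum_le_sum fun i _ => ?_
          rw [norm_smul, Real.norm_of_nonneg (hstep i)]
          exact mul_le_mul_of_nonneg_left (ha _) (hstep i)
    _ = f 0 * M := by rw [← sum_mul, sum_range_sub' f m]; ring

lemma sum_Icc_neg_natCast {M : Type*} [AddCommGroup M] (N : ℕ) (F : ℤ → M) :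
    ∑ n ∈ Icc (-(N : ℤ)) N, F n = ∑ k ∈ range (N + 1), (F k + F (-k)) - F 0 := by
  induction N with
  | zero => simp
  | succ N ih =>
    have hIcc : Icc (-((N + 1 : ℕ) : ℤ)) (N + 1 : ℕ)
        = insert (-((N : ℤ) + 1)) (insert ((N : ℤ) + 1) (Icc (-(N : ℤ)) N)) := by
      ext n; simp only [mem_insert, mem_Icc]; push_cast; omega
    rw [hIcc, sum_insert (by simp; omega), sum_insert (by simp), ih, sum_range_succ _ (N + 1)]
    push_cast
    abel

lemma norm_sum_Icc_natAbs_mul_zpow_le {f : ℕ → ℝ} (hf : Antitone f) (hf0 : ∀ n, 0 ≤ f n)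
    {z : ℂ} (hz : ‖z‖ = 1) (hz1 : z ≠ 1) (N : ℕ) :
    ‖∑ n ∈ Icc (-(N : ℤ)) N, (f n.natAbs : ℂ) * z ^ n‖ ≤ f 0 * (4 / ‖1 - z‖ + 1) := by
  have hz' : ‖z⁻¹‖ = 1 := by rw [norm_inv, hz, inv_one]
  have hz1' : z⁻¹ ≠ 1 := inv_ne_one.mpr hz1
  have hnorm_inv : ‖1 - z⁻¹‖ = ‖1 - z‖ := by
    have hz0 : z ≠ 0 := norm_ne_zero_iff.mp (by rw [hz]; exact one_ne_zero)
    rw [← norm_neg, show -(1 - z⁻¹) = z⁻¹ * (1 - z) by rw [mul_sub, inv_mul_cancel₀ hz0]; ring,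
      norm_mul, hz', one_mul]
  have abel (w : ℂ) (hw : ‖w‖ = 1) (hw1 : w ≠ 1) :
      ‖∑ k ∈ range (N + 1), f k • w ^ k‖ ≤ f 0 * (2 / ‖1 - w‖) :=
    hf.norm_sum_range_smul_le hf0 (norm_geom_sum_le hw hw1) _
  have hsplit : ∑ n ∈ Icc (-(N : ℤ)) N, (f n.natAbs : ℂ) * z ^ n
      = ∑ k ∈ range (N + 1), f k • z ^ k + ∑ k ∈ range (N + 1), f k • z⁻¹ ^ k - (f 0 : ℂ) := by
    rw [sum_Icc_neg_natCast]
    simp only [Int.natAbs_neg, Int.natAbs_natCast, Int.natAbs_zero, zpow_neg, zpow_natCast,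
      zpow_zero, mul_one, ← inv_pow, sum_add_distrib, Complex.real_smul]
  rw [hsplit]
  calc _ ≤ ‖∑ k ∈ range (N + 1), f k • z ^ k‖ + ‖∑ k ∈ range (N + 1), f k • z⁻¹ ^ k‖
        + ‖(f 0 : ℂ)‖ := norm_sub_le_of_le (norm_add_le _ _) le_rfl
    _ ≤ f 0 * (2 / ‖1 - z‖) + f 0 * (2 / ‖1 - z⁻¹‖) + f 0 := by
        gcongr
        · exact abel z hz hz1
        · exact abel z⁻¹ hz' hz1'
        · rw [Complex.norm_real, Real.norm_of_nonneg (hf0 0)]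
    _ = f 0 * (4 / ‖1 - z‖ + 1) := by rw [hnorm_inv]; ring

section PiFinset

variable {ι α : Type*} [Fintype ι] [DecidableEq ι]

lemma sum_piFinset_eq_sum_sum_update {M : Type*} [AddCommMonoid M] (t : ι → Finset α) (i : ι)
    (a : α) (F : (ι → α) → M) :
    ∑ j ∈ Fintype.piFinset t, F j
      = ∑ j ∈ Fintype.piFinset (Function.update t i {a}), ∑ n ∈ t i, F (Function.update j i n) := by
  rw [← sum_product']
  refine sum_nbij' (fun j => (Function.update j i a, j i)) (fun p => Function.update p.1 i p.2)
    ?_ ?_ ?_ ?_ ?_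
  · intro j hj
    simp only [Fintype.mem_piFinset, mem_product] at hj ⊢
    refine ⟨fun l => ?_, hj i⟩
    rcases eq_or_ne l i with rfl | hl <;> simp [*]
  · rintro ⟨j, n⟩ hjn
    simp only [Fintype.mem_piFinset, mem_product] at hjn ⊢
    intro l
    rcases eq_or_ne l i with rfl | hl
    · simpa using hjn.2
    · simpa [hl] using hjn.1 l
  · intro j _
    simp
  · rintro ⟨j, n⟩ hjn
    simp only [Fintype.mem_piFinset, mem_product] at hjn
    have hji : j i = a := by simpa using hjn.1 i
    simp [← hji]
  · intro j _
    simp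

lemma card_piFinset_update_singleton [DecidableEq α] (s : Finset α) (i : ι) (a : α) :
    #(Fintype.piFinset (Function.update (fun _ => s) i {a})) = #s ^ (Fintype.card ι - 1) := by
  rw [Fintype.card_piFinset]
  simp only [Function.apply_update (fun _ => card), card_singleton]
  rw [prod_update_of_mem (mem_univ i), prod_const, one_mul, sdiff_singleton_eq_erase,
    card_erase_of_mem (mem_univ i), card_univ]

end PiFinset

lemma fourier_eq_toCircle_zpow {T : ℝ} (n : ℤ) (w : AddCircle T) :
    fourier n w = (w.toCircle : ℂ) ^ n := by
  rw [fourier_apply, AddCircle.toCircle_zsmul, Circle.coe_zpow]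

lemma toCircle_ne_one {w : UnitAddCircle} (hw : w ≠ 0) : (w.toCircle : ℂ) ≠ 1 := by
  rw [ne_eq, Circle.coe_eq_one, ← AddCircle.toCircle_zero]
  exact (AddCircle.injective_toCircle one_ne_zero).ne hw

section Characters

variable {d : ℕ}

lemma norm_charTd (j : Fin d → ℤ) (y : Fin d → UnitAddCircle) : ‖charTd j y‖ = 1 := by
  simp [charTd, norm_prod, fourier_apply, Circle.norm_coe]

lemma continuous_charTd (j : Fin d → ℤ) : Continuous (charTd j) :=
  continuous_finsetProd _ fun i _ => (fourier (j i)).continuous.comp (continuous_apply i)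

lemma charTd_zero_right (j : Fin d → ℤ) : charTd j 0 = 1 := by
  simp [charTd, fourier_apply]

lemma charTd_neg_mul (j : Fin d → ℤ) (t x : Fin d → UnitAddCircle) :
    charTd (fun i => -(j i)) t * charTd j x = charTd j (x - t) := by
  simp only [charTd, ← prod_mul_distrib, Pi.sub_apply, fourier_apply, ← Circle.coe_mul,
    ← AddCircle.toCircle_add, smul_sub, neg_smul, neg_add_eq_sub]

lemma charTd_update (j : Fin d → ℤ) (i : Fin d) (n : ℤ) (y : Fin d → UnitAddCircle) :
    charTd (Function.update j i n) y = fourier n (y i) * ∏ l ∈ univ \ {i}, fourier (j l) (y l) := by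
  rw [charTd, ← prod_update_of_mem (mem_univ i)]
  refine prod_congr rfl fun l _ => ?_
  rcases eq_or_ne l i with rfl | hl <;> simp [*]

end Characters

/-- The weight `(1 - q/N²)^δ` of a lattice point with `|j|² = q`, set to `0` outside the ball:
the positive part `(1 - q/N²)_+^δ` would not vanish there for `δ = 0`, as `0 ^ 0 = 1`. -/
noncomputable def bochnerRieszWeight (δ : ℝ) (N : ℕ) (q : ℝ) : ℝ :=
  if q ≤ (N : ℝ) ^ 2 then (1 - q / (N : ℝ) ^ 2) ^ δ else 0

section Weight

variable {δ : ℝ} {N : ℕ} {q : ℝ}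

lemma bochnerRieszWeight_nonneg (δ : ℝ) (N : ℕ) (q : ℝ) : 0 ≤ bochnerRieszWeight δ N q := by
  unfold bochnerRieszWeight
  split_ifs with hq
  · exact Real.rpow_nonneg (sub_nonneg.mpr (div_le_one_of_le₀ hq (by positivity))) δ
  · exact le_rfl

lemma bochnerRieszWeight_le_one (hδ : 0 ≤ δ) (hq : 0 ≤ q) : bochnerRieszWeight δ N q ≤ 1 := by
  unfold bochnerRieszWeight
  split_ifs with hqN
  · exact Real.rpow_le_one (sub_nonneg.mpr (div_le_one_of_le₀ hqN (by positivity)))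
      (sub_le_self _ (by positivity)) hδ
  · exact zero_le_one

lemma bochnerRieszWeight_zero (N : ℕ) : bochnerRieszWeight δ N 0 = 1 := by
  simp [bochnerRieszWeight]

lemma bochnerRieszWeight_antitone (hδ : 0 ≤ δ) : Antitone (bochnerRieszWeight δ N) := by
  intro q r hqr
  by_cases hr : r ≤ (N : ℝ) ^ 2
  · rw [bochnerRieszWeight, bochnerRieszWeight, if_pos hr, if_pos (hqr.trans hr)]
    refine Real.rpow_le_rpow (sub_nonneg.mpr (div_le_one_of_le₀ hr (by positivity))) ?_ hδ
    gcongr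
  · rw [bochnerRieszWeight, if_neg hr]
    exact bochnerRieszWeight_nonneg δ N q

lemma three_quarters_rpow_le_bochnerRieszWeight (hδ : 0 ≤ δ)
    (hqN : 4 * q ≤ (N : ℝ) ^ 2) : (3 / 4 : ℝ) ^ δ ≤ bochnerRieszWeight δ N q := by
  have hdiv : q / (N : ℝ) ^ 2 ≤ 1 / 4 := by
    rcases (Nat.cast_nonneg (α := ℝ) N).eq_or_lt with hN | hN
    · simp [← hN]
    · rw [div_le_iff₀ (by positivity)]
      linarith
  rw [bochnerRieszWeight, if_pos (by nlinarith [sq_nonneg (N : ℝ)])]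
  exact Real.rpow_le_rpow (by norm_num) (by linarith) hδ

end Weight

noncomputable def latticeCube (d N : ℕ) : Finset (Fin d → ℤ) :=
  Fintype.piFinset fun _ => Icc (-(N : ℤ)) N

lemma sum_latticeBall_eq_sum_latticeCube {d : ℕ} {M : Type*} [AddCommMonoid M] (δ : ℝ) (N : ℕ)
    (φ : (Fin d → ℤ) → ℝ → M) (hφ : ∀ j, φ j 0 = 0) :
    ∑ j ∈ latticeBall d N, φ j ((1 - (∑ i, ((j i : ℝ)) ^ 2) / (N : ℝ) ^ 2) ^ δ)
      = ∑ j ∈ latticeCube d N, φ j (bochnerRieszWeight δ N (∑ i, ((j i : ℝ)) ^ 2)) := by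
  rw [latticeBall, sum_filter, latticeCube]
  refine sum_congr rfl fun j _ => ?_
  have hcast : (∑ i, (j i) ^ 2 ≤ (N : ℤ) ^ 2) ↔ ∑ i, ((j i : ℝ)) ^ 2 ≤ (N : ℝ) ^ 2 := by
    exact_mod_cast Iff.rfl
  simp only [bochnerRieszWeight, hcast]
  split_ifs <;> simp [hφ]

section Constant

variable {d : ℕ} {δ : ℝ}

lemma bochnerRieszConst_eq_sum_latticeCube (d : ℕ) (δ : ℝ) (N : ℕ) :
    bochnerRieszConst d δ N
      = ∑ j ∈ latticeCube d N, bochnerRieszWeight δ N (∑ i, ((j i : ℝ)) ^ 2) :=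
  sum_latticeBall_eq_sum_latticeCube δ N (fun _ r => r) fun _ => rfl

lemma one_le_bochnerRieszConst (N : ℕ) : 1 ≤ bochnerRieszConst d δ N := by
  rw [bochnerRieszConst_eq_sum_latticeCube]
  calc (1 : ℝ) = bochnerRieszWeight δ N (∑ i, (((0 : Fin d → ℤ) i : ℝ)) ^ 2) := by
        simp [bochnerRieszWeight_zero]
    _ ≤ _ := single_le_sum (f := fun j : Fin d → ℤ => bochnerRieszWeight δ N (∑ i, ((j i : ℝ)) ^ 2))
        (fun j _ => bochnerRieszWeight_nonneg _ _ _) (by simp [latticeCube])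

lemma bochnerRieszConst_pos (N : ℕ) : 0 < bochnerRieszConst d δ N :=
  zero_lt_one.trans_le (one_le_bochnerRieszConst N)

/-- The cube `[0, N / 2d]^d` lies in the ball of radius `N / 2`, where every weight is at least
`(3/4)^δ`. -/
lemma three_quarters_rpow_mul_le_bochnerRieszConst (hδ : 0 ≤ δ) (hd : 0 < d) (N : ℕ) :
    (3 / 4 : ℝ) ^ δ * ((N / (2 * d) + 1 : ℕ) : ℝ) ^ d ≤ bochnerRieszConst d δ N := by
  set m := N / (2 * d)
  have hmN : 2 * d * m ≤ N := Nat.mul_div_le N (2 * d)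
  set T : Finset (Fin d → ℤ) := Fintype.piFinset fun _ => Icc 0 (m : ℤ)
  have hT : T ⊆ latticeCube d N := by
    intro j hj
    simp only [T, latticeCube, Fintype.mem_piFinset, mem_Icc] at hj ⊢
    intro l
    have := hj l
    constructor <;> nlinarith
  have hweight : ∀ j ∈ T, (3 / 4 : ℝ) ^ δ ≤ bochnerRieszWeight δ N (∑ i, ((j i : ℝ)) ^ 2) := by
    intro j hj
    simp only [T, Fintype.mem_piFinset, mem_Icc] at hj
    refine three_quarters_rpow_le_bochnerRieszWeight hδ ?_
    have hsq : ∑ i, ((j i : ℝ)) ^ 2 ≤ d * (m : ℝ) ^ 2 := by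
      calc ∑ i, ((j i : ℝ)) ^ 2 ≤ ∑ _i : Fin d, (m : ℝ) ^ 2 := by
            gcongr with i
            · exact_mod_cast (hj i).1
            · exact_mod_cast (hj i).2
        _ = d * (m : ℝ) ^ 2 := by simp
    have hd1 : (1 : ℝ) ≤ d := by exact_mod_cast hd
    have hmN' : 2 * (d : ℝ) * m ≤ N := by exact_mod_cast hmN
    have h1 : 4 * (d * (m : ℝ) ^ 2) ≤ (2 * d * m) ^ 2 := by
      nlinarith [mul_le_mul_of_nonneg_right hd1 (sq_nonneg (m : ℝ))]
    nlinarith [pow_le_pow_left₀ (by positivity) hmN' 2]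
  have hcard : (#T : ℝ) = ((m + 1 : ℕ) : ℝ) ^ d := by
    simp [T, Fintype.card_piFinset]
  calc (3 / 4 : ℝ) ^ δ * ((m + 1 : ℕ) : ℝ) ^ d = ∑ _j ∈ T, (3 / 4 : ℝ) ^ δ := by
        rw [sum_const, nsmul_eq_mul, hcard, mul_comm]
    _ ≤ ∑ j ∈ T, bochnerRieszWeight δ N (∑ i, ((j i : ℝ)) ^ 2) := sum_le_sum hweight
    _ ≤ bochnerRieszConst d δ N := by
        rw [bochnerRieszConst_eq_sum_latticeCube]
        exact sum_le_sum_of_subset_of_nonneg hT fun _ _ _ => bochnerRieszWeight_nonneg _ _ _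

end Constant

noncomputable def bochnerRieszKernel (d : ℕ) (δ : ℝ) (N : ℕ) (y : Fin d → UnitAddCircle) : ℂ :=
  ((bochnerRieszConst d δ N : ℝ) : ℂ)⁻¹ *
    ∑ j ∈ latticeBall d N, (((1 - (∑ i, ((j i : ℝ)) ^ 2) / (N : ℝ) ^ 2) ^ δ : ℝ) : ℂ) * charTd j y

section Kernel

variable {d : ℕ} {δ : ℝ}

lemma norm_sum_Icc_update_le (hδ : 0 ≤ δ) (N : ℕ) (j : Fin d → ℤ) (i : Fin d)
    {y : Fin d → UnitAddCircle} (hy : y i ≠ 0) :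
    ‖∑ n ∈ Icc (-(N : ℤ)) N,
        (bochnerRieszWeight δ N (∑ l, ((Function.update j i n l : ℤ) : ℝ) ^ 2) : ℂ) *
          charTd (Function.update j i n) y‖ ≤ 4 / ‖1 - ((y i).toCircle : ℂ)‖ + 1 := by
  set S : ℝ := ∑ l ∈ univ \ {i}, ((j l : ℤ) : ℝ) ^ 2
  set f : ℕ → ℝ := fun k => bochnerRieszWeight δ N ((k : ℝ) ^ 2 + S)
  set c : ℂ := ∏ l ∈ univ \ {i}, fourier (j l) (y l)
  have hsq (n : ℤ) : ∑ l, ((Function.update j i n l : ℤ) : ℝ) ^ 2 = (n.natAbs : ℝ) ^ 2 + S := by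
    simp only [Function.apply_update (fun _ (v : ℤ) => (v : ℝ) ^ 2),
      sum_update_of_mem (mem_univ i), Nat.cast_natAbs, Int.cast_abs, sq_abs, S]
  have hf : Antitone f := fun a b hab => bochnerRieszWeight_antitone hδ (by gcongr)
  have hc : ‖c‖ = 1 := by simp [c, norm_prod, fourier_apply, Circle.norm_coe]
  have hline : ∑ n ∈ Icc (-(N : ℤ)) N, (bochnerRieszWeight δ N
        (∑ l, ((Function.update j i n l : ℤ) : ℝ) ^ 2) : ℂ) * charTd (Function.update j i n) y
      = (∑ n ∈ Icc (-(N : ℤ)) N, (f n.natAbs : ℂ) * ((y i).toCircle : ℂ) ^ n) * c := by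
    rw [sum_mul]
    refine sum_congr rfl fun n _ => ?_
    rw [hsq, charTd_update, fourier_eq_toCircle_zpow, mul_assoc]
  rw [hline, norm_mul, hc, mul_one]
  calc _ ≤ f 0 * (4 / ‖1 - ((y i).toCircle : ℂ)‖ + 1) :=
        norm_sum_Icc_natAbs_mul_zpow_le hf (fun _ => bochnerRieszWeight_nonneg _ _ _)
          (Circle.norm_coe _) (toCircle_ne_one hy) N
    _ ≤ 4 / ‖1 - ((y i).toCircle : ℂ)‖ + 1 :=
        mul_le_of_le_one_left (by positivity) (bochnerRieszWeight_le_one hδ (by positivity))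

lemma norm_sum_latticeBall_le (hδ : 0 ≤ δ) (N : ℕ) {y : Fin d → UnitAddCircle} {i : Fin d}
    (hy : y i ≠ 0) :
    ‖∑ j ∈ latticeBall d N,
        (((1 - (∑ l, ((j l : ℝ)) ^ 2) / (N : ℝ) ^ 2) ^ δ : ℝ) : ℂ) * charTd j y‖
      ≤ ((2 * N + 1 : ℕ) : ℝ) ^ (d - 1) * (4 / ‖1 - ((y i).toCircle : ℂ)‖ + 1) := by
  rw [sum_latticeBall_eq_sum_latticeCube δ N (fun j r => (r : ℂ) * charTd j y) (by simp),
    latticeCube, sum_piFinset_eq_sum_sum_update _ i 0]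
  refine (norm_sum_le _ _).trans
    ((sum_le_sum fun j _ => norm_sum_Icc_update_le hδ N j i hy).trans ?_)
  rw [sum_const, nsmul_eq_mul, card_piFinset_update_singleton, Int.card_Icc, Fintype.card_fin]
  have hcard : ((N : ℤ) + 1 - -(N : ℤ)).toNat = 2 * N + 1 := by omega
  rw [hcard, Nat.cast_pow]

lemma continuous_bochnerRieszKernel (N : ℕ) : Continuous (bochnerRieszKernel d δ N) :=
  continuous_const.mul
    (continuous_finsetSum _ fun j _ => continuous_const.mul (continuous_charTd j))

lemma norm_bochnerRieszKernel_le_one (N : ℕ) (y : Fin d → UnitAddCircle) :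
    ‖bochnerRieszKernel d δ N y‖ ≤ 1 := by
  have hβ := bochnerRieszConst_pos (d := d) (δ := δ) N
  have hsum : ‖∑ j ∈ latticeBall d N,
      (((1 - (∑ i, ((j i : ℝ)) ^ 2) / (N : ℝ) ^ 2) ^ δ : ℝ) : ℂ) * charTd j y‖
        ≤ bochnerRieszConst d δ N := by
    rw [sum_latticeBall_eq_sum_latticeCube δ N (fun j r => (r : ℂ) * charTd j y) (by simp),
      bochnerRieszConst_eq_sum_latticeCube]
    refine (norm_sum_le _ _).trans (sum_le_sum fun j _ => ?_)
    rw [norm_mul, norm_charTd, mul_one, Complex.norm_real,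
      Real.norm_of_nonneg (bochnerRieszWeight_nonneg _ _ _)]
  rw [bochnerRieszKernel, norm_mul, norm_inv, Complex.norm_real, Real.norm_of_nonneg hβ.le]
  exact inv_mul_le_one_of_le₀ hsum hβ.le

lemma bochnerRieszKernel_zero (N : ℕ) : bochnerRieszKernel d δ N 0 = 1 := by
  have hβ : ((bochnerRieszConst d δ N : ℝ) : ℂ) ≠ 0 := by
    exact_mod_cast (bochnerRieszConst_pos N).ne'
  simp only [bochnerRieszKernel, charTd_zero_right, mul_one]
  rw [← Complex.ofReal_sum, ← bochnerRieszConst, inv_mul_cancel₀ hβ]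

lemma norm_bochnerRieszKernel_le (hδ : 0 ≤ δ) (N : ℕ) {y : Fin d → UnitAddCircle} {i : Fin d}
    (hy : y i ≠ 0) :
    ‖bochnerRieszKernel d δ N y‖ ≤ (4 * d : ℝ) ^ (d - 1) * (4 / ‖1 - ((y i).toCircle : ℂ)‖ + 1)
      / (3 / 4 : ℝ) ^ δ / ((N / (2 * d) + 1 : ℕ) : ℝ) := by
  have hd : 0 < d := i.pos
  set m := N / (2 * d)
  set C := 4 / ‖1 - ((y i).toCircle : ℂ)‖ + 1
  have hβ := bochnerRieszConst_pos (d := d) (δ := δ) N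
  have hN : 2 * N + 1 ≤ 4 * d * (m + 1) := by
    have h : N < 2 * d * (m + 1) := Nat.lt_mul_div_succ N (by omega)
    linarith
  have hN' : ((2 * N + 1 : ℕ) : ℝ) ≤ 4 * d * ((m + 1 : ℕ) : ℝ) := by exact_mod_cast hN
  have hpow : ((m + 1 : ℕ) : ℝ) ^ d = ((m + 1 : ℕ) : ℝ) ^ (d - 1) * ((m + 1 : ℕ) : ℝ) := by
    rw [← pow_succ, Nat.sub_add_cancel hd]
  calc ‖bochnerRieszKernel d δ N y‖
      ≤ (bochnerRieszConst d δ N)⁻¹ * (((2 * N + 1 : ℕ) : ℝ) ^ (d - 1) * C) := by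
        rw [bochnerRieszKernel, norm_mul, norm_inv, Complex.norm_real, Real.norm_of_nonneg hβ.le]
        gcongr
        exact norm_sum_latticeBall_le hδ N hy
    _ ≤ ((3 / 4 : ℝ) ^ δ * ((m + 1 : ℕ) : ℝ) ^ d)⁻¹ *
          ((4 * d * ((m + 1 : ℕ) : ℝ)) ^ (d - 1) * C) := by
        gcongr
        exact three_quarters_rpow_mul_le_bochnerRieszConst hδ hd N
    _ = (4 * d : ℝ) ^ (d - 1) * C / (3 / 4 : ℝ) ^ δ / ((m + 1 : ℕ) : ℝ) := by
        rw [hpow, mul_pow]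
        field_simp

lemma tendsto_bochnerRieszKernel_of_ne_zero (hδ : 0 ≤ δ) {y : Fin d → UnitAddCircle} (hy : y ≠ 0) :
    Tendsto (fun N => bochnerRieszKernel d δ N y) atTop (𝓝 0) := by
  obtain ⟨i, hi⟩ := Function.ne_iff.mp hy
  have hd : 2 * d ≠ 0 := by have := i.pos; omega
  have hm : Tendsto (fun N : ℕ => ((N / (2 * d) + 1 : ℕ) : ℝ)) atTop atTop :=
    tendsto_natCast_atTop_atTop.comp
      ((tendsto_add_atTop_nat 1).comp (Nat.tendsto_div_const_atTop hd))
  refine squeeze_zero_norm (fun N => norm_bochnerRieszKernel_le hδ N hi) ?_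
  simpa [div_eq_mul_inv] using (tendsto_inv_atTop_zero.comp hm).const_mul _

end Kernel

lemma tendsto_bochnerRieszKernel_sub {d : ℕ} {δ : ℝ} (hδ : 0 ≤ δ) (x t : Fin d → UnitAddCircle) :
    Tendsto (fun N => bochnerRieszKernel d δ N (x - t)) atTop
      (𝓝 (({x} : Set _).indicator 1 t)) := by
  rcases eq_or_ne t x with rfl | ht
  · simp [bochnerRieszKernel_zero]
  · rw [Set.indicator_of_notMem (Set.notMem_singleton_iff.mpr ht)]
    exact tendsto_bochnerRieszKernel_of_ne_zero hδ (sub_ne_zero.mpr ht.symm)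

lemma bochnerRieszMean_eq_cInt {d : ℕ} (μ : ComplexMeasure (Fin d → UnitAddCircle)) (δ : ℝ)
    (x : Fin d → UnitAddCircle) (N : ℕ) :
    ((bochnerRieszConst d δ N : ℝ) : ℂ)⁻¹ *
        ∑ j ∈ latticeBall d N, (((1 - (∑ i, ((j i : ℝ)) ^ 2) / (N : ℝ) ^ 2) ^ δ : ℝ) : ℂ) *
          fourierCoeffTd μ j * charTd j x
      = cInt μ (fun t => bochnerRieszKernel d δ N (x - t)) := by
  simp only [bochnerRieszKernel]
  rw [cInt_const_mul, cInt_sum μ _ (F := fun j t =>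
    (((1 - (∑ i, ((j i : ℝ)) ^ 2) / (N : ℝ) ^ 2) ^ δ : ℝ) : ℂ) * charTd j (x - t))
    fun j _ => continuous_const.mul ((continuous_charTd j).comp (continuous_sub_left x))]
  congr 1
  refine sum_congr rfl fun j _ => ?_
  simp only [← charTd_neg_mul, ← mul_assoc, mul_right_comm _ _ (charTd j x), cInt_const_mul]
  rfl

/-- **Wiener's lemma for Bochner–Riesz means on `𝕋^d`.** For a finite complex Borel
measure `μ` on `𝕋^d`, `δ ≥ 0`, and every `x ∈ 𝕋^d`,
`μ({x}) = lim_N (1/β_N^{d,δ}) ∑_{|j|≤N} (1−|j|²/N²)_+^δ μ̂(j) e^{2πi⟨j,x⟩}`. -/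
theorem wiener_lemma_bochner_riesz_Td {d : ℕ}
    (μ : MeasureTheory.ComplexMeasure (Fin d → UnitAddCircle))
    (δ : ℝ) (hδ : 0 ≤ δ) (x : Fin d → UnitAddCircle) :
    Tendsto (fun N : ℕ =>
        ((bochnerRieszConst d δ N : ℝ) : ℂ)⁻¹ *
          ∑ j ∈ latticeBall d N,
            (((1 - (∑ i, ((j i : ℝ)) ^ 2) / (N : ℝ) ^ 2) ^ δ : ℝ) : ℂ) *
              fourierCoeffTd μ j * charTd j x)
      atTop (𝓝 (μ {x})) := by
  simp only [bochnerRieszMean_eq_cInt]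
  rw [← cInt_indicator_one μ (measurableSet_singleton x)]
  exact tendsto_cInt_of_dominated μ
    (fun N => ((continuous_bochnerRieszKernel N).comp (continuous_sub_left x)).measurable)
    (fun N t => norm_bochnerRieszKernel_le_one N (x - t)) (tendsto_bochnerRieszKernel_sub hδ x)
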